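/- Expected Shortfall is subadditive on a finite equiprobable space: for all X, Y ∈ ℝ^m and τ ∈ {1,…,m}, ES_τ(X + Y) ≤ ES_τ(X) + ES_τ(Y), where ES_τ(Z) = −(δ/τ) Σ_{j=1}^τ Z̃_j and Z̃ denotes the increasing rearrangement of Z. -/

import Mathlib

/-!
After sorting, the first `τ` entries of `Z` are its `τ` smallest ones, so their sum is the least
value of `∑ j ∈ S, Z j` over index sets `S` of size `τ`. Evaluating the sums for `X` and `Y` on
the index set that realises this minimum for `X + Y` gives superadditivity of the sorted partial
sums, and multiplying by `-(δ / τ) ≤ 0` turns it into subadditivity of Expected Shortfall.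
-/

open Finset

theorem Finset.sum_le_sum_of_card_eq_of_forall_le {ι β : Type*} [DecidableEq ι]
    [AddCommMonoid β] [LinearOrder β] [IsOrderedAddMonoid β] {s t : Finset ι} (f : ι → β)
    (hcard : #s = #t) (hf : ∀ a ∈ s, ∀ b ∉ s, f a ≤ f b) :
    ∑ i ∈ s, f i ≤ ∑ i ∈ t, f i := by
  rw [← sum_inter_add_sum_sdiff s t, ← sum_inter_add_sum_sdiff t s, inter_comm]
  gcongr ∑ i ∈ t ∩ s, f i + ?_
  have hcard' : #(s \ t) = #(t \ s) := card_sdiff_comm hcard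
  rcases (t \ s).eq_empty_or_nonempty with hts | hts
  · rw [hts, card_empty, card_eq_zero] at hcard'
    simp [hcard', hts]
  -- The least value of `f` on `t \ s` separates its values on `s \ t` from those on `t \ s`.
  calc ∑ i ∈ s \ t, f i ≤ #(s \ t) • (t \ s).inf' hts f := by
        refine sum_le_card_nsmul _ _ _ fun a ha ↦ (le_inf'_iff hts f).2 fun b hb ↦ ?_
        exact hf a (mem_sdiff.1 ha).1 b (mem_sdiff.1 hb).2
    _ ≤ ∑ i ∈ t \ s, f i := by
        rw [hcard']
        exact card_nsmul_le_sum _ _ _ fun b hb ↦ inf'_le f hb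

section

variable {m : ℕ} {β : Type*} [AddCommMonoid β] [LinearOrder β] [IsOrderedAddMonoid β]

theorem Tuple.sum_comp_sort_le_sum (Z : Fin m → β) (τ : ℕ) {S : Finset (Fin m)}
    (hS : #S = #(univ.filter fun j : Fin m ↦ ↑j < τ)) :
    ∑ j ∈ univ.filter (fun j : Fin m ↦ ↑j < τ), (Z ∘ Tuple.sort Z) j ≤ ∑ j ∈ S, Z j := by
  set σ := Tuple.sort Z
  calc ∑ j ∈ univ.filter (fun j : Fin m ↦ ↑j < τ), (Z ∘ σ) j
      ≤ ∑ j ∈ S.map σ.symm.toEmbedding, (Z ∘ σ) j := by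
        refine sum_le_sum_of_card_eq_of_forall_le _ (by simp [hS]) fun a ha b hb ↦ ?_
        refine Tuple.monotone_sort Z (Fin.le_iff_val_le_val.2 ?_)
        simp only [mem_filter, mem_univ, true_and] at ha hb
        omega
    _ = ∑ j ∈ S, Z j := by simp [sum_map]

theorem Tuple.sum_comp_sort_add_sum_comp_sort_le (X Y : Fin m → β) (τ : ℕ) :
    ∑ j ∈ univ.filter (fun j : Fin m ↦ ↑j < τ), (X ∘ Tuple.sort X) j
        + ∑ j ∈ univ.filter (fun j : Fin m ↦ ↑j < τ), (Y ∘ Tuple.sort Y) j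
      ≤ ∑ j ∈ univ.filter (fun j : Fin m ↦ ↑j < τ), ((X + Y) ∘ Tuple.sort (X + Y)) j := by
  set I := univ.filter fun j : Fin m ↦ ↑j < τ
  set S := I.map (Tuple.sort (X + Y)).toEmbedding
  have hS : #S = #I := card_map _
  calc _ ≤ ∑ j ∈ S, X j + ∑ j ∈ S, Y j :=
        add_le_add (Tuple.sum_comp_sort_le_sum X τ hS) (Tuple.sum_comp_sort_le_sum Y τ hS)
    _ = _ := by simp only [S, sum_map, ← sum_add_distrib]; rfl

end

theorem stmt_5_general {m : ℕ} (δ : ℝ) (hδ : 0 < δ) (τ : ℕ)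
    (X Y : Fin m → ℝ) :
    -(δ / τ) * ∑ j ∈ Finset.univ.filter (fun j : Fin m => (j : ℕ) < τ),
        ((X + Y) ∘ Tuple.sort (X + Y)) j
      ≤ (-(δ / τ) * ∑ j ∈ Finset.univ.filter (fun j : Fin m => (j : ℕ) < τ),
          (X ∘ Tuple.sort X) j)
        + (-(δ / τ) * ∑ j ∈ Finset.univ.filter (fun j : Fin m => (j : ℕ) < τ),
            (Y ∘ Tuple.sort Y) j) := by
  rw [← mul_add]
  exact mul_le_mul_of_nonpos_left (Tuple.sum_comp_sort_add_sum_comp_sort_le X Y τ)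
    (neg_nonpos.2 (by positivity))

/-- Subadditivity of Expected Shortfall on a finite equiprobable space. -/
theorem stmt_5 {m : ℕ} (δ : ℝ) (hδ : 0 < δ) (τ : ℕ) (hτ1 : 1 ≤ τ) (hτm : τ ≤ m)
    (X Y : Fin m → ℝ) :
    -(δ / τ) * ∑ j ∈ Finset.univ.filter (fun j : Fin m => (j : ℕ) < τ),
        ((X + Y) ∘ Tuple.sort (X + Y)) j
      ≤ (-(δ / τ) * ∑ j ∈ Finset.univ.filter (fun j : Fin m => (j : ℕ) < τ),
          (X ∘ Tuple.sort X) j)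
        + (-(δ / τ) * ∑ j ∈ Finset.univ.filter (fun j : Fin m => (j : ℕ) < τ),
            (Y ∘ Tuple.sort Y) j) :=
  stmt_5_general δ hδ τ X Y
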